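/- arXiv:1310.8564 — 2 statements merged into one kernel-verified Lean document; each statement's English description precedes it below -/
import Mathlib

section
/- Let d ≥ 1 and let p ∈ ℂ[z₁^{±1},…,z_d^{±1}] be a non-zero Laurent polynomial with wd(p) ≥ 1. Then for all λ ≥ 0 one has μ_{T^d}({z ∈ T^d : |p(z)| ≤ λ}) ≤ (8·√3/√47) · d · wd(p) · ( λ / |lead(p)| )^{1/(d·wd(p))}. -/
open MeasureTheory Real Filter

noncomputable section

/-- `Laur d` is the Laurent polynomial ring `ℂ[ℤ^d] = ℂ[z₁^{±1},…,z_d^{±1}]`,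
realized as the group algebra of `ℤ^d` over `ℂ`. -/
abbrev Laur (d : ℕ) : Type := AddMonoidAlgebra ℂ (Fin d → ℤ)

/-- the coefficient of `z₁^{n₁}⋯z_d^{n_d}` in `p` -/
def coeff {d : ℕ} (p : Laur d) (n : Fin d → ℤ) : ℂ := (AddMonoidAlgebra.coeff p : (Fin d → ℤ) →₀ ℂ) n

/-- the top degree `n⁺` of `p` in the last variable `z_{d}` -/
def topDeg {d : ℕ} (p : Laur (d+1)) : ℤ :=
  sSup ((fun n : Fin (d+1) → ℤ => n (Fin.last d)) ''
    ((Finsupp.support (AddMonoidAlgebra.coeff p) : Finset (Fin (d+1) → ℤ)) : Set (Fin (d+1) → ℤ)))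

/-- the bottom degree `n⁻` of `p` in the last variable `z_{d}` -/
def botDeg {d : ℕ} (p : Laur (d+1)) : ℤ :=
  sInf ((fun n : Fin (d+1) → ℤ => n (Fin.last d)) ''
    ((Finsupp.support (AddMonoidAlgebra.coeff p) : Finset (Fin (d+1) → ℤ)) : Set (Fin (d+1) → ℤ)))

/-- the coefficient `q⁺(p) = q_{n⁺}` of the top power of the last variable:
a Laurent polynomial in one variable fewer -/
def qplus {d : ℕ} (p : Laur (d+1)) : Laur d :=
  AddMonoidAlgebra.ofCoeff (Finsupp.comapDomain (fun n : Fin d → ℤ => Fin.snoc n (topDeg p)) (AddMonoidAlgebra.coeff p)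
    (fun a _ b _ h => funext fun i => by simpa using congrFun h (Fin.castSucc i)))

/-- the leading coefficient `lead(p) = p_d`, obtained by iterating `q⁺` -/
def lead : {d : ℕ} → Laur d → ℂ
  | 0, p => coeff p 0
  | _+1, p => lead (qplus p)

/-- the width `wd(p) = max{w₀(p),…,w_{d-1}(p)}` where `w_i(p) = w(p_i)` and
`p_i = q⁺(p_{i-1})` -/
def wd : {d : ℕ} → Laur d → ℤ
  | 0, _ => 0
  | _+1, p => max (topDeg p - botDeg p) (wd (qplus p))

/-- evaluation of a Laurent polynomial at a point of `(ℂ^×)^d` -/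
def evalL {d : ℕ} (p : Laur d) (z : Fin d → ℂ) : ℂ :=
  Finsupp.sum (AddMonoidAlgebra.coeff p) fun n a => a * ∏ i, z i ^ n i

/-- the normalized Haar measure on the unit circle `S¹ ⊆ ℂ`, as a measure on `ℂ` -/
def circleMeasure : Measure ℂ :=
  Measure.map (fun x : ℝ => Complex.exp (2 * Real.pi * Complex.I * x))
    (volume.restrict (Set.Ioc (0:ℝ) 1))

instance : IsProbabilityMeasure circleMeasure := by
  have h1 : IsProbabilityMeasure (volume.restrict (Set.Ioc (0:ℝ) 1)) := by
    constructor
    simp [Real.volume_Ioc]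
  exact Measure.isProbabilityMeasure_map
    ((Complex.continuous_exp.comp (continuous_const.mul Complex.continuous_ofReal)).aemeasurable)

/-- the normalized Haar measure on the `d`-torus `T^d`, as a measure on `ℂ^d` -/
def torusMeasure (d : ℕ) : Measure (Fin d → ℂ) := Measure.pi fun _ => circleMeasure

/-- entrywise evaluation of a matrix over `ℂ[ℤ^d]` at a point of the torus -/
def evalMatrix {d m n : ℕ} (A : Matrix (Fin m) (Fin n) (Laur d)) (z : Fin d → ℂ) :
    Matrix (Fin m) (Fin n) ℂ := fun i j => evalL (A i j) z

/-- the spectral density function of `r_A^{(2)} : L²(ℤ^d)^m → L²(ℤ^d)^n`: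
`F_A(λ) = ∫_{T^d} #{i : μ_i(z) ≤ λ²} dμ_{T^d}(z)` where `μ₁(z),…,μ_m(z)` are the
eigenvalues of the positive semidefinite Hermitian matrix `A(z)·A(z)^*` -/
def sdf {d m n : ℕ} (A : Matrix (Fin m) (Fin n) (Laur d)) (lam : ℝ) : ℝ :=
  ∫ z, ((Finset.univ.filter fun i : Fin m =>
      (Matrix.isHermitian_mul_conjTranspose_self (evalMatrix A z)).eigenvalues i ≤ lam ^ 2).card : ℝ)
    ∂ torusMeasure d

/-- the `L¹`-norm `‖p‖₁` of a Laurent polynomial -/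
def norm1 {d : ℕ} (p : Laur d) : ℝ := Finsupp.sum (AddMonoidAlgebra.coeff p) fun _ a => ‖a‖

/-- the `L¹`-norm `‖A‖₁` of a matrix over `ℂ[ℤ^d]`: the maximum of the `L¹`-norms
of its entries -/
def norm1M {d m n : ℕ} (A : Matrix (Fin m) (Fin n) (Laur d)) : ℝ := ⨆ i, ⨆ j, norm1 (A i j)

/-! Slice `T^d` along the last coordinate. Over a point `z'` of `T^(d-1)`, `z ↦ z^(-n⁻) p(z', z)`
is a polynomial of degree at most `w₀(p) ≤ W` (for any integer `W ≥ wd p`) with leading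
coefficient `q⁺(p)(z')`. Factoring it over its roots, `|p(z', z)| ≤ λ` puts `z` within
`(λ / |q⁺(p)(z')|)^(1/w₀)` of a root, and a chord ball on the circle has Haar measure at most its
radius. Hence each fiber over a `z'` with `|q⁺(p)(z')| > t` has measure at most `W (λ/t)^(1/W)`,
while the `z'` with `|q⁺(p)(z')| ≤ t` are controlled by induction applied to `q⁺(p)`, whose
leading coefficient is again `lead p`. Taking `u = (λ/|lead p|)^(1/d)` and `t = |lead p| u^(d-1)`
makes both contributions multiples of `u^(1/W)`, which gives the bound with constant `1` in place
of `8√3/√47`. -/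

open scoped Polynomial

section Degrees

variable {d : ℕ} {p : Laur (d + 1)}

theorem le_topDeg {n : Fin (d + 1) → ℤ} (hn : n ∈ p.coeff.support) : n (Fin.last d) ≤ topDeg p :=
  le_csSup ((p.coeff.support.finite_toSet.image _).bddAbove) ⟨n, hn, rfl⟩

theorem botDeg_le {n : Fin (d + 1) → ℤ} (hn : n ∈ p.coeff.support) : botDeg p ≤ n (Fin.last d) :=
  csInf_le ((p.coeff.support.finite_toSet.image _).bddBelow) ⟨n, hn, rfl⟩

theorem exists_mem_support_last_eq_topDeg (hp : p ≠ 0) :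
    ∃ n ∈ p.coeff.support, n (Fin.last d) = topDeg p :=
  Set.Nonempty.csSup_mem
    ((Finset.coe_nonempty.2 (Finsupp.support_nonempty_iff.2 (by simpa using hp))).image _)
    (p.coeff.support.finite_toSet.image _)

theorem topDeg_sub_botDeg_le_wd : topDeg p - botDeg p ≤ wd p :=
  le_max_left _ _

theorem wd_qplus_le : wd (qplus p) ≤ wd p :=
  le_max_right _ _

theorem coeff_qplus (m : Fin d → ℤ) : (qplus p).coeff m = p.coeff (Fin.snoc m (topDeg p)) := rfl

theorem qplus_ne_zero (hp : p ≠ 0) : qplus p ≠ 0 := by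
  obtain ⟨n, hn, hlast⟩ := exists_mem_support_last_eq_topDeg hp
  have hsnoc : Fin.snoc (Fin.init n) (topDeg p) = n := hlast ▸ Fin.snoc_init_self n
  intro h
  have := congrArg (fun q : Laur d => q.coeff (Fin.init n)) h
  simp only [coeff_qplus, hsnoc] at this
  exact Finsupp.mem_support_iff.1 hn (by simpa using this)

theorem image_snoc_support_qplus :
    (qplus p).coeff.support.image (Fin.snoc · (topDeg p)) =
      p.coeff.support.filter (· (Fin.last d) = topDeg p) := by
  ext n
  simp only [Finset.mem_image, Finset.mem_filter, Finsupp.mem_support_iff, coeff_qplus]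
  constructor
  · rintro ⟨m, hm, rfl⟩
    exact ⟨hm, by simp⟩
  · rintro ⟨hn, hlast⟩
    exact ⟨Fin.init n, by rwa [← hlast, Fin.snoc_init_self], by rw [← hlast, Fin.snoc_init_self]⟩

end Degrees

theorem lead_ne_zero {d : ℕ} {p : Laur d} (hp : p ≠ 0) : lead p ≠ 0 := by
  induction d with
  | zero =>
    obtain ⟨n, hn⟩ := Finsupp.support_nonempty_iff (f := p.coeff) |>.2 (by simpa using hp)
    simpa [lead, coeff, Subsingleton.elim n 0] using hn
  | succ d ih => exact ih (qplus_ne_zero hp)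

theorem evalL_fin_zero (p : Laur 0) (z : Fin 0 → ℂ) : evalL p z = lead p := by
  simp [evalL, lead, coeff, Finsupp.sum_fintype, Subsingleton.elim default ![]]

theorem measurable_evalL {d : ℕ} (p : Laur d) : Measurable (evalL p) := by
  unfold evalL Finsupp.sum
  fun_prop

section Fiber

variable {d : ℕ} (p : Laur (d + 1)) (z' : Fin d → ℂ)

def fiberPoly : ℂ[X] :=
  ∑ n ∈ p.coeff.support, Polynomial.C (p.coeff n * ∏ i : Fin d, z' i ^ n i.castSucc) *
    Polynomial.X ^ (n (Fin.last d) - botDeg p).toNat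

theorem evalL_snoc {z : ℂ} (hz : z ≠ 0) :
    evalL p (Fin.snoc z' z) = z ^ botDeg p * (fiberPoly p z').eval z := by
  rw [fiberPoly, Polynomial.eval_finsetSum, Finset.mul_sum, evalL, Finsupp.sum]
  refine Finset.sum_congr rfl fun n hn => ?_
  have hpow : z ^ n (Fin.last d) = z ^ botDeg p * z ^ (n (Fin.last d) - botDeg p).toNat := by
    rw [← zpow_natCast, Int.toNat_of_nonneg (sub_nonneg.2 (botDeg_le hn)), ← zpow_add₀ hz,
      add_sub_cancel]
  simp only [Polynomial.eval_mul, Polynomial.eval_C, Polynomial.eval_pow, Polynomial.eval_X,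
    Fin.prod_univ_castSucc, Fin.snoc_castSucc, Fin.snoc_last, hpow]
  ring

theorem natDegree_fiberPoly_le : (fiberPoly p z').natDegree ≤ (topDeg p - botDeg p).toNat := by
  refine Polynomial.natDegree_sum_le_of_forall_le _ _ fun n hn => ?_
  refine (Polynomial.natDegree_C_mul_le _ _).trans ?_
  rw [Polynomial.natDegree_X_pow]
  have := botDeg_le hn
  have := le_topDeg hn
  omega

theorem coeff_fiberPoly_width :
    (fiberPoly p z').coeff (topDeg p - botDeg p).toNat = evalL (qplus p) z' := by
  classical
  have hfilter : p.coeff.support.filter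
      (fun n => (topDeg p - botDeg p).toNat = (n (Fin.last d) - botDeg p).toNat) =
      p.coeff.support.filter (· (Fin.last d) = topDeg p) := by
    refine Finset.filter_congr fun n hn => ?_
    have := botDeg_le hn
    have := le_topDeg hn
    omega
  simp only [fiberPoly, Polynomial.finsetSum_coeff, Polynomial.coeff_C_mul_X_pow]
  rw [← Finset.sum_filter, hfilter, ← image_snoc_support_qplus,
    Finset.sum_image fun _ _ _ _ h => Fin.snoc_injective2 h |>.1, evalL, Finsupp.sum]
  simp [coeff_qplus, Fin.snoc_castSucc]

end Fiber

instance (d : ℕ) : IsProbabilityMeasure (torusMeasure d) := by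
  unfold torusMeasure
  infer_instance

theorem four_mul_norm_le_norm_toCircle_sub_one (θ : UnitAddCircle) :
    4 * ‖θ‖ ≤ ‖(AddCircle.toCircle θ : ℂ) - 1‖ := by
  induction θ using QuotientAddGroup.induction_on with | H x => ?_
  set y := x - round x
  have hy : |y| ≤ 1 / 2 := abs_sub_round x
  have hxy : (AddCircle.toCircle (x : UnitAddCircle) : ℂ) =
      Complex.exp (Complex.I * (2 * π * y : ℝ)) := by
    rw [AddCircle.toCircle_apply_mk, Circle.coe_exp, Complex.exp_eq_exp_iff_exists_int]
    exact ⟨round x, by push_cast [y]; ring⟩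
  -- Jordan's inequality `2x/π ≤ sin x` on `[0, π/2]`, applied to `π |y| ≤ π/2`
  have hsin := mul_abs_le_abs_sin (x := π * y)
    (by rw [abs_mul, abs_of_pos pi_pos]; nlinarith [pi_pos])
  rw [abs_mul, abs_of_pos pi_pos, ← mul_assoc, div_mul_cancel₀ _ pi_ne_zero] at hsin
  rw [UnitAddCircle.norm_eq, hxy, Complex.norm_exp_I_mul_ofReal_sub_one, Real.norm_eq_abs, abs_mul,
    abs_two, show 2 * π * y / 2 = π * y by ring]
  linarith

theorem four_mul_dist_le_norm_toCircle_sub (θ θ' : UnitAddCircle) :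
    4 * dist θ θ' ≤ ‖(AddCircle.toCircle θ : ℂ) - AddCircle.toCircle θ'‖ := by
  have : (AddCircle.toCircle θ : ℂ) - AddCircle.toCircle θ' =
      AddCircle.toCircle θ' * ((AddCircle.toCircle (θ - θ') : ℂ) - 1) := by
    rw [sub_eq_add_neg θ, AddCircle.toCircle_add, AddCircle.toCircle_neg, Circle.coe_mul,
      Circle.coe_inv]
    field_simp [Circle.coe_ne_zero]
  rw [this, norm_mul, Circle.norm_coe, one_mul, dist_eq_norm]
  exact four_mul_norm_le_norm_toCircle_sub_one _

theorem circleMeasure_eq_map_toCircle :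
    circleMeasure = Measure.map (fun θ : UnitAddCircle => (AddCircle.toCircle θ : ℂ)) volume := by
  have h := AddCircle.measurePreserving_mk 1 0
  rw [zero_add] at h
  rw [← h.map_eq, Measure.map_map (by fun_prop) h.measurable, circleMeasure]
  congr 1
  funext x
  rw [Function.comp_apply, AddCircle.toCircle_apply_mk, Circle.coe_exp]
  push_cast
  ring_nf

theorem circleMeasure_closedBall_le (a : ℂ) (ε : ℝ) :
    circleMeasure (Metric.closedBall a ε) ≤ ENNReal.ofReal ε := by
  set e := fun θ : UnitAddCircle => (AddCircle.toCircle θ : ℂ)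
  rw [circleMeasure_eq_map_toCircle, Measure.map_apply (by fun_prop) measurableSet_closedBall]
  rcases (e ⁻¹' Metric.closedBall a ε).eq_empty_or_nonempty with h | ⟨θ₀, hθ₀⟩
  · rw [h, measure_empty]
    exact zero_le
  have hsub : e ⁻¹' Metric.closedBall a ε ⊆ Metric.closedBall θ₀ (ε / 2) := by
    intro θ hθ
    have hchord : dist (e θ) (e θ₀) ≤ 2 * ε := by
      linarith [dist_triangle_right (e θ) (e θ₀) a, Metric.mem_closedBall.1 hθ,
        Metric.mem_closedBall.1 hθ₀]
    rw [dist_eq_norm] at hchord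
    rw [Metric.mem_closedBall]
    linarith [four_mul_dist_le_norm_toCircle_sub θ θ₀]
  refine (measure_mono hsub).trans ?_
  rw [AddCircle.volume_closedBall]
  exact ENNReal.ofReal_le_ofReal (by linarith [min_le_right (1 : ℝ) (2 * (ε / 2))])

theorem exists_mem_roots_norm_sub_pow_le {P : ℂ[X]} (hP : 0 < P.natDegree) (z : ℂ) :
    ∃ r ∈ P.roots, ‖P.leadingCoeff‖ * ‖z - r‖ ^ P.natDegree ≤ ‖P.eval z‖ := by
  have hs := IsAlgClosed.splits P
  have hcard : P.roots.card = P.natDegree := hs.natDegree_eq_card_roots.symm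
  obtain ⟨r, hr, hmin⟩ := Multiset.exists_min_image (fun r => ‖z - r‖)
    (Multiset.card_pos.1 (hcard ▸ hP))
  refine ⟨r, hr, ?_⟩
  calc ‖P.leadingCoeff‖ * ‖z - r‖ ^ P.natDegree
      = ‖P.leadingCoeff‖ * (P.roots.map fun _ => ‖z - r‖).prod := by simp [hcard]
    _ ≤ ‖P.leadingCoeff‖ * (P.roots.map fun s => ‖z - s‖).prod := by
        gcongr
        exact Multiset.prod_map_le_prod_map₀ _ _ (fun _ _ => norm_nonneg _) hmin
    _ = ‖P.eval z‖ := by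
        rw [hs.eval_eq_prod_roots, norm_mul]
        congr 1
        exact Multiset.prod_hom' P.roots (normHom : ℂ →*₀ ℝ) fun s => z - s

theorem circleMeasure_norm_eval_le_of_natDegree_pos {P : ℂ[X]} (hP : 0 < P.natDegree) {lam : ℝ}
    (hlam : 0 ≤ lam) :
    circleMeasure {z | ‖P.eval z‖ ≤ lam} ≤
      ENNReal.ofReal (P.natDegree * (lam / ‖P.leadingCoeff‖) ^ (P.natDegree : ℝ)⁻¹) := by
  set n := P.natDegree
  set ε := (lam / ‖P.leadingCoeff‖) ^ (n : ℝ)⁻¹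
  have hc : 0 < ‖P.leadingCoeff‖ := by
    simpa using Polynomial.ne_zero_of_natDegree_gt hP
  have hsub : {z | ‖P.eval z‖ ≤ lam} ⊆ ⋃ r ∈ P.roots.toFinset, Metric.closedBall r ε := by
    intro z hz
    obtain ⟨r, hr, hle⟩ := exists_mem_roots_norm_sub_pow_le hP z
    refine Set.mem_biUnion (Multiset.mem_toFinset.2 hr) ?_
    rw [Metric.mem_closedBall, dist_eq_norm, le_rpow_inv_iff_of_pos (norm_nonneg _)
      (by positivity) (by positivity), rpow_natCast, le_div_iff₀ hc, mul_comm]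
    exact hle.trans hz
  calc circleMeasure {z | ‖P.eval z‖ ≤ lam}
      ≤ ∑ r ∈ P.roots.toFinset, circleMeasure (Metric.closedBall r ε) :=
        (measure_mono hsub).trans (measure_biUnion_finset_le _ _)
    _ ≤ ∑ _r ∈ P.roots.toFinset, ENNReal.ofReal ε :=
        Finset.sum_le_sum fun r _ => circleMeasure_closedBall_le r ε
    _ ≤ n * ENNReal.ofReal ε := by
        rw [Finset.sum_const, nsmul_eq_mul]
        gcongr
        exact (Multiset.toFinset_card_le _).trans (Polynomial.card_roots' P)
    _ = ENNReal.ofReal (n * ε) := by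
        rw [ENNReal.ofReal_mul (by positivity), ENNReal.ofReal_natCast]

theorem natCast_mul_rpow_inv_le {x : ℝ} (hx0 : 0 ≤ x) (hx1 : x ≤ 1) {m n : ℕ} (hm : 0 < m)
    (hmn : m ≤ n) : m * x ^ (m : ℝ)⁻¹ ≤ n * x ^ (n : ℝ)⁻¹ := by
  have hm' : (0 : ℝ) < m := by exact_mod_cast hm
  have hmn' : (m : ℝ) ≤ n := by exact_mod_cast hmn
  exact mul_le_mul hmn' (rpow_le_rpow_of_exponent_ge' hx0 hx1 (by positivity) (inv_anti₀ hm' hmn'))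
    (rpow_nonneg hx0 _) (by positivity)

theorem circleMeasure_norm_eval_le {P : ℂ[X]} (hP : P ≠ 0) {W : ℕ} (hW : 1 ≤ W)
    (hPW : P.natDegree ≤ W) {lam : ℝ} (hlam : 0 ≤ lam) :
    circleMeasure {z | ‖P.eval z‖ ≤ lam} ≤
      ENNReal.ofReal (W * (lam / ‖P.leadingCoeff‖) ^ (W : ℝ)⁻¹) := by
  have hc : 0 < ‖P.leadingCoeff‖ := by simpa using hP
  rcases le_or_gt ‖P.leadingCoeff‖ lam with hbig | hsmall
  · refine prob_le_one.trans (ENNReal.one_le_ofReal.2 ?_)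
    exact one_le_mul_of_one_le_of_one_le (by exact_mod_cast hW)
      (one_le_rpow ((one_le_div hc).2 hbig) (by positivity))
  rcases Nat.eq_zero_or_pos P.natDegree with hdeg | hdeg
  · have hempty : {z | ‖P.eval z‖ ≤ lam} = ∅ := by
      refine Set.eq_empty_of_forall_notMem fun z hz => hsmall.not_ge ?_
      change ‖P.eval z‖ ≤ lam at hz
      rwa [Polynomial.eq_C_of_natDegree_eq_zero hdeg, Polynomial.eval_C, ← hdeg] at hz
    simp [hempty]
  refine (circleMeasure_norm_eval_le_of_natDegree_pos hdeg hlam).trans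
    (ENNReal.ofReal_le_ofReal (natCast_mul_rpow_inv_le (by positivity) ?_ hdeg hPW))
  exact (div_le_one hc).2 hsmall.le

theorem torusMeasure_succ_apply {d : ℕ} {S : Set (Fin (d + 1) → ℂ)} (hS : MeasurableSet S) :
    torusMeasure (d + 1) S = ∫⁻ z', circleMeasure {z | Fin.snoc z' z ∈ S} ∂torusMeasure d := by
  have h := (measurePreserving_piFinSuccAbove (fun _ : Fin (d + 1) => circleMeasure)
    (Fin.last d)).symm
  rw [torusMeasure, ← h.measure_preimage hS.nullMeasurableSet,
    Measure.prod_apply_symm (h.measurable hS)]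
  simp only [MeasurableEquiv.piFinSuccAbove_symm_apply, Fin.insertNthEquiv_last]
  rfl

theorem lintegral_le_measure_add {α : Type*} [MeasurableSpace α] {μ : Measure α}
    [IsProbabilityMeasure μ] {f : α → ENNReal} {A : Set α} (hA : MeasurableSet A) {b : ENNReal}
    (hfA : ∀ x ∈ A, f x ≤ 1) (hfb : ∀ x ∉ A, f x ≤ b) :
    ∫⁻ x, f x ∂μ ≤ μ A + b := by
  have hf : ∀ x, f x ≤ A.indicator 1 x + b := by
    intro x
    by_cases hx : x ∈ A
    · simpa [hx] using (hfA x hx).trans le_self_add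
    · simpa [hx] using hfb x hx
  calc ∫⁻ x, f x ∂μ ≤ ∫⁻ x, A.indicator 1 x + b ∂μ := lintegral_mono hf
    _ = μ A + b := by
        rw [lintegral_add_right _ measurable_const, lintegral_indicator_one hA, lintegral_const,
          measure_univ, mul_one]

def torusSublevel {d : ℕ} (p : Laur d) (lam : ℝ) : Set (Fin d → ℂ) :=
  {z | (∀ i, ‖z i‖ = 1) ∧ ‖evalL p z‖ ≤ lam}

theorem measurableSet_torusSublevel {d : ℕ} (p : Laur d) (lam : ℝ) :
    MeasurableSet (torusSublevel p lam) := by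
  refine MeasurableSet.inter (s₁ := {z | ∀ i, ‖z i‖ = 1}) ?_
    (measurableSet_le (measurable_evalL p).norm measurable_const)
  rw [Set.ofPred_forall]
  exact MeasurableSet.iInter fun i =>
    measurableSet_eq_fun (measurable_pi_apply i).norm measurable_const

theorem circleMeasure_fiber_torusSublevel_le {d : ℕ} (p : Laur (d + 1)) {z' : Fin d → ℂ}
    (hq : evalL (qplus p) z' ≠ 0) {W : ℕ} (hW : 1 ≤ W) (hpW : topDeg p - botDeg p ≤ W)
    {lam : ℝ} (hlam : 0 ≤ lam) :
    circleMeasure {z | Fin.snoc z' z ∈ torusSublevel p lam} ≤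
      ENNReal.ofReal (W * (lam / ‖evalL (qplus p) z'‖) ^ (W : ℝ)⁻¹) := by
  set P := fiberPoly p z'
  have hdeg : P.natDegree = (topDeg p - botDeg p).toNat :=
    (natDegree_fiberPoly_le p z').antisymm
      (Polynomial.le_natDegree_of_ne_zero (by rwa [coeff_fiberPoly_width]))
  have hlead : P.leadingCoeff = evalL (qplus p) z' := by
    rw [Polynomial.leadingCoeff, hdeg, coeff_fiberPoly_width]
  have hsub : {z | Fin.snoc z' z ∈ torusSublevel p lam} ⊆ {z | ‖P.eval z‖ ≤ lam} := by
    rintro z ⟨hunit, hle⟩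
    have hz : ‖z‖ = 1 := by simpa using hunit (Fin.last d)
    rw [evalL_snoc p z' (norm_ne_zero_iff.1 (hz.symm ▸ one_ne_zero)), norm_mul, norm_zpow, hz,
      one_zpow, one_mul] at hle
    exact hle
  refine (measure_mono hsub).trans ?_
  rw [← hlead]
  exact circleMeasure_norm_eval_le (Polynomial.leadingCoeff_ne_zero.1 (hlead ▸ hq)) hW
    (by omega) hlam

theorem circleMeasure_fiber_torusSublevel_le_of_notMem {d : ℕ} (p : Laur (d + 1))
    {z' : Fin d → ℂ} {t : ℝ} (hz' : z' ∉ torusSublevel (qplus p) t) (ht : 0 ≤ t) {W : ℕ}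
    (hW : 1 ≤ W) (hpW : topDeg p - botDeg p ≤ W) {lam u : ℝ} (hlam : 0 ≤ lam) (hu : 0 ≤ u)
    (hlamu : lam ≤ u * t) :
    circleMeasure {z | Fin.snoc z' z ∈ torusSublevel p lam} ≤
      ENNReal.ofReal (W * u ^ (W : ℝ)⁻¹) := by
  by_cases hunit : ∀ i, ‖z' i‖ = 1
  · have hq : t < ‖evalL (qplus p) z'‖ := not_le.1 fun h => hz' ⟨hunit, h⟩
    refine (circleMeasure_fiber_torusSublevel_le p (norm_pos_iff.1 (ht.trans_lt hq)) hW hpW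
      hlam).trans (ENNReal.ofReal_le_ofReal ?_)
    gcongr
    exact div_le_of_le_mul₀ (norm_nonneg _) hu (hlamu.trans (by gcongr))
  · have hempty : {z | Fin.snoc z' z ∈ torusSublevel p lam} = ∅ := by
      refine Set.eq_empty_of_forall_notMem fun z hz => hunit fun i => ?_
      simpa using hz.1 i.castSucc
    simp [hempty]

theorem pow_rpow_inv_natCast_mul {u : ℝ} (hu : 0 ≤ u) {k : ℕ} (hk : k ≠ 0) (W : ℝ) :
    (u ^ k) ^ ((k * W)⁻¹) = u ^ W⁻¹ := by
  rw [← rpow_natCast, ← rpow_mul hu, mul_inv, ← mul_assoc,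
    mul_inv_cancel₀ (Nat.cast_ne_zero.2 hk), one_mul]

theorem torusMeasure_torusSublevel_le_add {d : ℕ} (p : Laur (d + 1)) {W : ℕ} (hW : 1 ≤ W)
    (hpW : topDeg p - botDeg p ≤ W) {lam t u : ℝ} (hlam : 0 ≤ lam) (ht : 0 ≤ t) (hu : 0 ≤ u)
    (hlamu : lam ≤ u * t) :
    torusMeasure (d + 1) (torusSublevel p lam) ≤
      torusMeasure d (torusSublevel (qplus p) t) + ENNReal.ofReal (W * u ^ (W : ℝ)⁻¹) := by
  rw [torusMeasure_succ_apply (measurableSet_torusSublevel p lam)]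
  exact lintegral_le_measure_add (measurableSet_torusSublevel _ _) (fun _ _ => prob_le_one)
    fun z' hz' => circleMeasure_fiber_torusSublevel_le_of_notMem p hz' ht hW hpW hlam hu hlamu

theorem torusMeasure_torusSublevel_le {d : ℕ} {p : Laur (d + 1)} (hp : lead p ≠ 0) {W : ℕ}
    (hW : 1 ≤ W) (hpW : wd p ≤ W) {lam : ℝ} (hlam : 0 ≤ lam) :
    torusMeasure (d + 1) (torusSublevel p lam) ≤
      ENNReal.ofReal ((d + 1) * W * (lam / ‖lead p‖) ^ (((d + 1) * W : ℝ)⁻¹)) := by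
  induction d generalizing lam with
  | zero =>
    have hfiber (z' : Fin 0 → ℂ) :
        circleMeasure {z | Fin.snoc z' z ∈ torusSublevel p lam} ≤
          ENNReal.ofReal (W * (lam / ‖lead p‖) ^ (W : ℝ)⁻¹) := by
      have hq : evalL (qplus p) z' = lead p := evalL_fin_zero _ _
      have := circleMeasure_fiber_torusSublevel_le p (hq ▸ hp) hW
        (topDeg_sub_botDeg_le_wd.trans hpW) hlam
      rwa [hq] at this
    rw [torusMeasure_succ_apply (measurableSet_torusSublevel p lam)]
    refine (lintegral_mono hfiber).trans ?_
    rw [lintegral_const, measure_univ, mul_one]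
    norm_num
  | succ d ih =>
    set c := ‖lead p‖
    have hc : 0 < c := norm_pos_iff.2 hp
    set u := (lam / c) ^ ((d + 2 : ℕ) : ℝ)⁻¹
    set t := c * u ^ (d + 1)
    have hu : 0 ≤ u := by positivity
    have hupow : u ^ (d + 2) = lam / c := rpow_inv_natCast_pow (by positivity) (by omega)
    have hlamt : lam = u * t := by
      rw [← mul_div_cancel₀ lam hc.ne', ← hupow]
      ring
    have hA : torusMeasure (d + 1) (torusSublevel (qplus p) t) ≤
        ENNReal.ofReal ((d + 1) * W * u ^ (W : ℝ)⁻¹) := by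
      have hexp := pow_rpow_inv_natCast_mul hu d.succ_ne_zero W
      push_cast at hexp
      have := ih hp (wd_qplus_le.trans hpW) (lam := t) (by positivity)
      rwa [show ‖lead (qplus p)‖ = c from rfl, mul_div_cancel_left₀ _ hc.ne', hexp] at this
    have hexp := pow_rpow_inv_natCast_mul hu (by omega : d + 2 ≠ 0) W
    push_cast at hexp ⊢
    rw [← hupow, show (d : ℝ) + 1 + 1 = d + 2 by ring, hexp]
    calc torusMeasure (d + 2) (torusSublevel p lam)
        ≤ torusMeasure (d + 1) (torusSublevel (qplus p) t) + ENNReal.ofReal (W * u ^ (W : ℝ)⁻¹) :=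
          torusMeasure_torusSublevel_le_add p hW (topDeg_sub_botDeg_le_wd.trans hpW) hlam
            (by positivity) hu hlamt.le
      _ ≤ ENNReal.ofReal ((d + 1) * W * u ^ (W : ℝ)⁻¹) + ENNReal.ofReal (W * u ^ (W : ℝ)⁻¹) := by
          gcongr
      _ = ENNReal.ofReal ((d + 2) * W * u ^ (W : ℝ)⁻¹) := by
          rw [← ENNReal.ofReal_add (by positivity) (by positivity)]
          ring_nf

theorem one_le_eight_mul_sqrt_three_div_sqrt_47 : 1 ≤ 8 * √3 / √47 := by
  refine (one_le_div (by positivity)).2 ?_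
  rw [show 8 * √3 = √(8 ^ 2 * 3) by
    rw [Real.sqrt_mul' _ (by norm_num), Real.sqrt_sq (by norm_num)]]
  exact Real.sqrt_le_sqrt (by norm_num)

theorem measure_sublevel_le_general (d : ℕ) (p : Laur d) (hp : p ≠ 0)
    (hwd : 1 ≤ wd p) (lam : ℝ) (hlam : 0 ≤ lam) :
    torusMeasure d {z | (∀ i, ‖z i‖ = 1) ∧ ‖evalL p z‖ ≤ lam} ≤
      ENNReal.ofReal (8 * Real.sqrt 3 / Real.sqrt 47 * d * (wd p : ℝ) *
        ((lam / ‖lead p‖) ^ (((d : ℝ) * (wd p : ℝ))⁻¹))) := by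
  cases d with
  | zero => simp [wd] at hwd
  | succ d =>
    lift wd p to ℕ using (by omega) with W hW
    refine (torusMeasure_torusSublevel_le (lead_ne_zero hp) (W := W) (by omega) hW.ge hlam).trans
      (ENNReal.ofReal_le_ofReal ?_)
    have hx : 0 ≤ (d + 1 : ℝ) * W * (lam / ‖lead p‖) ^ (((d + 1) * W : ℝ)⁻¹) := by positivity
    push_cast
    nlinarith [le_mul_of_one_le_left hx one_le_eight_mul_sqrt_three_div_sqrt_47]

/-- For a nonzero Laurent polynomial `p ∈ ℂ[z₁^{±1},…,z_d^{±1}]` with `wd(p) ≥ 1`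
and all `λ ≥ 0`:
`μ_{T^d}({z ∈ T^d : |p(z)| ≤ λ}) ≤ (8√3/√47)·d·wd(p)·(λ/|lead(p)|)^{1/(d·wd(p))}`. -/
theorem measure_sublevel_le (d : ℕ) (hd : 1 ≤ d) (p : Laur d) (hp : p ≠ 0)
    (hwd : 1 ≤ wd p) (lam : ℝ) (hlam : 0 ≤ lam) :
    torusMeasure d {z | (∀ i, ‖z i‖ = 1) ∧ ‖evalL p z‖ ≤ lam} ≤
      ENNReal.ofReal (8 * Real.sqrt 3 / Real.sqrt 47 * d * (wd p : ℝ) *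
        ((lam / ‖lead p‖) ^ (((d : ℝ) * (wd p : ℝ))⁻¹))) :=
  measure_sublevel_le_general d p hp hwd lam hlam
end
end

section
/- For every complex number a and every λ ≥ 0, the normalized Haar measure of {z ∈ S¹ : |z − a| ≤ λ} is at most (8·√3/√47)·λ. -/
/-!
Two points of the set lie within `2λ` of each other, and on the circle
`‖e(s) - e(t)‖ = 2 |sin (π (s - t))|` for `e(x) = exp (2πix)`. By Jordan's inequality
`2 |u| ≤ |sin (π u)|` for `|u| ≤ 1/2`, so once a parameter `x₀ ∈ (0, 1]` of the set is fixed, every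
other parameter lies within `λ/2` of `x₀ - 1`, `x₀` or `x₀ + 1`: three intervals of total length
`2λ`, and `2 ≤ 8√3/√47`.
-/

open MeasureTheory Real Filter

noncomputable section

open Complex in
theorem norm_exp_two_pi_I_mul_sub_exp (s t : ℝ) :
    ‖exp (2 * π * I * s) - exp (2 * π * I * t)‖ = 2 * |Real.sin (π * (s - t))| := by
  have hfactor : exp (2 * π * I * s) - exp (2 * π * I * t)
      = exp (2 * π * I * t) * (exp (I * ↑(2 * π * (s - t))) - 1) := by
    rw [mul_sub, mul_one, ← Complex.exp_add]; push_cast; ring_nf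
  rw [hfactor, norm_mul, norm_exp_I_mul_ofReal_sub_one, norm_mul,
    show (2 * π * I * t) = ↑(2 * π * t) * I by push_cast; ring, norm_exp_ofReal_mul_I,
    mul_assoc, mul_div_cancel_left₀ _ two_ne_zero]
  simp

open Complex in
theorem abs_sin_pi_mul_sub_le_of_norm_exp_sub_le {a : ℂ} {s t lam : ℝ}
    (hs : ‖exp (2 * π * I * s) - a‖ ≤ lam) (ht : ‖exp (2 * π * I * t) - a‖ ≤ lam) :
    |Real.sin (π * (s - t))| ≤ lam := by
  have hchord : 2 * |Real.sin (π * (s - t))| ≤ 2 * lam := by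
    rw [← norm_exp_two_pi_I_mul_sub_exp]
    calc _ ≤ ‖exp (2 * π * I * s) - a‖ + ‖a - exp (2 * π * I * t)‖ :=
          norm_sub_le_norm_sub_add_norm_sub _ _ _
      _ ≤ 2 * lam := by rw [norm_sub_rev a]; linarith
  linarith

theorem abs_sin_pi_mul_abs (t : ℝ) : |sin (π * |t|)| = |sin (π * t)| := by
  rcases abs_choice t with h | h <;> simp [h]

theorem two_mul_abs_le_abs_sin_pi_mul {t : ℝ} (ht : |t| ≤ 1 / 2) :
    2 * |t| ≤ |sin (π * t)| := by
  have h := le_sin_mul (x := 2 * |t|) (by positivity) (by linarith)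
  rw [show π / 2 * (2 * |t|) = π * |t| by ring] at h
  exact h.trans ((le_abs_self _).trans (abs_sin_pi_mul_abs t).le)

theorem abs_le_or_le_abs_of_abs_sin_pi_mul_le {t lam : ℝ} (h : |sin (π * t)| ≤ lam) :
    |t| ≤ lam / 2 ∨ 1 - lam / 2 ≤ |t| := by
  rcases le_or_gt |t| (1 / 2) with ht | ht
  · exact .inl (by linarith [two_mul_abs_le_abs_sin_pi_mul ht])
  rcases le_or_gt |t| 1 with ht' | ht'
  · have hsymm : |sin (π * (1 - |t|))| = |sin (π * t)| := by
      rw [mul_one_sub, sin_pi_sub, abs_sin_pi_mul_abs]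
    have h' := two_mul_abs_le_abs_sin_pi_mul (t := 1 - |t|)
      (by rw [abs_le]; constructor <;> linarith)
    rw [hsymm, abs_of_nonneg (by linarith)] at h'
    exact .inr (by linarith)
  · exact .inr (by linarith [(abs_nonneg _).trans h])

theorem volume_setOf_abs_lt_one_and_abs_sin_pi_mul_le {lam : ℝ} (hlam : 0 ≤ lam) :
    volume {t : ℝ | |t| < 1 ∧ |sin (π * t)| ≤ lam} ≤ ENNReal.ofReal (2 * lam) := by
  have hsub : {t : ℝ | |t| < 1 ∧ |sin (π * t)| ≤ lam} ⊆
      Set.Icc (-(lam / 2)) (lam / 2) ∪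
        (Set.Icc (1 - lam / 2) 1 ∪ Set.Icc (-1) (-1 + lam / 2)) := by
    rintro t ⟨ht, hsin⟩
    rw [abs_lt] at ht
    rcases abs_le_or_le_abs_of_abs_sin_pi_mul_le hsin with h | h
    · exact .inl (abs_le.mp h)
    rcases le_or_gt 0 t with h0 | h0
    · rw [abs_of_nonneg h0] at h
      exact .inr (.inl ⟨h, ht.2.le⟩)
    · rw [abs_of_neg h0] at h
      exact .inr (.inr ⟨ht.1.le, by linarith⟩)
  calc _ ≤ _ := measure_mono hsub
    _ ≤ _ := (measure_union_le _ _).trans (add_le_add le_rfl (measure_union_le _ _))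
    _ = ENNReal.ofReal (2 * lam) := by
      simp only [Real.volume_Icc]
      rw [← ENNReal.ofReal_add (by linarith) (by linarith),
        ← ENNReal.ofReal_add (by linarith) (by linarith)]
      ring_nf

theorem two_le_eight_mul_sqrt_three_div_sqrt_47 : (2 : ℝ) ≤ 8 * √3 / √47 := by
  rw [le_div_iff₀ (by positivity),
    ← pow_le_pow_iff_left₀ (by positivity) (by positivity) two_ne_zero,
    mul_pow, mul_pow, sq_sqrt (by norm_num), sq_sqrt (by norm_num)]
  norm_num

open Complex Set in
theorem measure_ball_inter_circle_le_general (a : ℂ) (lam : ℝ) :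
    circleMeasure {z : ℂ | ‖z‖ = 1 ∧ ‖z - a‖ ≤ lam} ≤
      ENNReal.ofReal (8 * Real.sqrt 3 / Real.sqrt 47 * lam) := by
  set e : ℝ → ℂ := fun x => exp (2 * π * I * x)
  set E := e ⁻¹' {z : ℂ | ‖z‖ = 1 ∧ ‖z - a‖ ≤ lam} ∩ Ioc 0 1
  have he : Measurable e := by fun_prop
  have hμ : circleMeasure {z : ℂ | ‖z‖ = 1 ∧ ‖z - a‖ ≤ lam} = volume E := by
    rw [circleMeasure, Measure.map_apply he (by measurability),
      Measure.restrict_apply (he (by measurability))]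
  obtain hE | ⟨x₀, hx₀, hx₀I⟩ := E.eq_empty_or_nonempty
  · simp [hμ, hE]
  have hlam : 0 ≤ lam := (norm_nonneg _).trans hx₀.2
  have hsub : E ⊆ (· + -x₀) ⁻¹' {t : ℝ | |t| < 1 ∧ |Real.sin (π * t)| ≤ lam} := by
    rintro x ⟨hx, hxI⟩
    refine ⟨abs_lt.mpr ⟨by linarith [hxI.1, hx₀I.2], by linarith [hxI.2, hx₀I.1]⟩, ?_⟩
    simpa only [sub_eq_add_neg] using abs_sin_pi_mul_sub_le_of_norm_exp_sub_le hx.2 hx₀.2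
  calc circleMeasure {z : ℂ | ‖z‖ = 1 ∧ ‖z - a‖ ≤ lam}
      ≤ volume ((· + -x₀) ⁻¹' {t : ℝ | |t| < 1 ∧ |Real.sin (π * t)| ≤ lam}) :=
        hμ ▸ measure_mono hsub
    _ = volume {t : ℝ | |t| < 1 ∧ |Real.sin (π * t)| ≤ lam} := measure_preimage_add_right _ _ _
    _ ≤ ENNReal.ofReal (2 * lam) := volume_setOf_abs_lt_one_and_abs_sin_pi_mul_le hlam
    _ ≤ _ := ENNReal.ofReal_le_ofReal
        (mul_le_mul_of_nonneg_right two_le_eight_mul_sqrt_three_div_sqrt_47 hlam)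

/-- For every `a ∈ ℂ` and `λ ≥ 0`, the normalized Haar measure of
`{z ∈ S¹ : |z − a| ≤ λ}` is at most `(8√3/√47)·λ`. -/
theorem measure_ball_inter_circle_le (a : ℂ) (lam : ℝ) (hlam : 0 ≤ lam) :
    circleMeasure {z : ℂ | ‖z‖ = 1 ∧ ‖z - a‖ ≤ lam} ≤
      ENNReal.ofReal (8 * Real.sqrt 3 / Real.sqrt 47 * lam) :=
  measure_ball_inter_circle_le_general a lam
end
end
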